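/- The Hopf superalgebras A₄(ζ₄) and A₄(−ζ₄) are not isomorphic, where ζ₄ is a primitive fourth root of unity: the antipode of A₄(s·ζ₄) acts on the odd generator z by multiplication by −s·ζ₄, so the antipodes have different eigenvalues. -/

import Mathlib

open TensorProduct

section Base
variable (k : Type) [Field k]

/-- Koszul sign operator on a tensor product, built from parity involutions. -/
noncomputable def koszul {M N : Type} [AddCommGroup M] [Module k M] [AddCommGroup N] [Module k N]
    (J₁ : M →ₗ[k] M) (J₂ : N →ₗ[k] N) : M ⊗[k] N →ₗ[k] M ⊗[k] N :=
  (2:k)⁻¹ • (LinearMap.id + TensorProduct.map J₁ LinearMap.id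
      + TensorProduct.map LinearMap.id J₂ - TensorProduct.map J₁ J₂)

variable (A : Type) [Ring A] [Algebra k A]

/-- Signed ("super") multiplication `(A ⊗ A) ⊗ (A ⊗ A) → A ⊗ A`,
`(a ⊗ b) ⊗ (c ⊗ d) ↦ (−1)^{|b||c|} (ac) ⊗ (bd)`. -/
noncomputable def tensorSuperMul (J : A →ₗ[k] A) :
    (A ⊗[k] A) ⊗[k] (A ⊗[k] A) →ₗ[k] A ⊗[k] A :=
  TensorProduct.map (LinearMap.mul' k A) (LinearMap.mul' k A)
    ∘ₗ koszul k (TensorProduct.map LinearMap.id J) (TensorProduct.map J LinearMap.id)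
    ∘ₗ (TensorProduct.tensorTensorTensorComm k A A A A).toLinearMap

/-- A Hopf superalgebra, encoded by its parity involution `J` (the grading is by
`J`-eigenspaces: even part `{a | J a = a}`, odd part `{a | J a = -a}`). -/
structure HopfSuperData : Type where
  J : A →ₐ[k] A
  J_invol : ∀ a, J (J a) = a
  comul : A →ₗ[k] A ⊗[k] A
  counit : A →ₗ[k] k
  antipode : A →ₗ[k] A
  comul_J : ∀ a, comul (J a) = TensorProduct.map J.toLinearMap J.toLinearMap (comul a)
  counit_J : ∀ a, counit (J a) = counit a
  antipode_J : ∀ a, antipode (J a) = J (antipode a)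
  coassoc : (TensorProduct.assoc k A A A).toLinearMap ∘ₗ comul.rTensor A ∘ₗ comul
      = comul.lTensor A ∘ₗ comul
  rTensor_counit_comul : ∀ a, (TensorProduct.lid k A) (counit.rTensor A (comul a)) = a
  lTensor_counit_comul : ∀ a, (TensorProduct.rid k A) (counit.lTensor A (comul a)) = a
  comul_one : comul 1 = 1 ⊗ₜ[k] 1
  counit_one : counit 1 = 1
  counit_mul : ∀ a b, counit (a * b) = counit a * counit b
  comul_mul : ∀ a b, comul (a * b) = tensorSuperMul k A J.toLinearMap (comul a ⊗ₜ[k] comul b)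
  mul_antipode_rTensor_comul :
      ∀ a, LinearMap.mul' k A (antipode.rTensor A (comul a)) = algebraMap k A (counit a)
  mul_antipode_lTensor_comul :
      ∀ a, LinearMap.mul' k A (antipode.lTensor A (comul a)) = algebraMap k A (counit a)

variable {k A}

namespace HopfSuperData

variable {B : Type} [Ring B] [Algebra k B]

/-- The odd part of a Hopf superalgebra is nonzero. -/
def HasOddPart (H : HopfSuperData k A) : Prop := ∃ a : A, a ≠ 0 ∧ H.J a = -a

/-- Purely even Hopf superalgebras, i.e. ordinary Hopf algebras. -/
def PurelyEven (H : HopfSuperData k A) : Prop := ∀ a : A, H.J a = a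

/-- Even group-like elements. -/
def IsGroupLike (H : HopfSuperData k A) (g : A) : Prop :=
  H.J g = g ∧ H.counit g = 1 ∧ H.comul g = g ⊗ₜ[k] g

/-- An algebra isomorphism is an isomorphism of Hopf superalgebras if it preserves the
grading, the comultiplication and the counit. -/
def IsIso (H : HopfSuperData k A) (H' : HopfSuperData k B) (e : A ≃ₐ[k] B) : Prop :=
  (∀ a, e (H.J a) = H'.J (e a)) ∧
  (∀ a, H'.comul (e a) = TensorProduct.map e.toLinearMap e.toLinearMap (H.comul a)) ∧
  (∀ a, H'.counit (e a) = H.counit a)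

end HopfSuperData

end Base
section Ext
variable {k : Type} [Field k] {A A' : Type} [Ring A] [Algebra k A] [Ring A'] [Algebra k A']

namespace HopfSuperData

/-- The part of the comultiplication whose second tensor leg is even. -/
noncomputable def comulEvenPart (H : HopfSuperData k A) : A →ₗ[k] A ⊗[k] A :=
  (2:k)⁻¹ • (H.comul + H.J.toLinearMap.lTensor A ∘ₗ H.comul)

/-- The part of the comultiplication whose second tensor leg is odd. -/
noncomputable def comulOddPart (H : HopfSuperData k A) : A →ₗ[k] A ⊗[k] A :=
  (2:k)⁻¹ • (H.comul - H.J.toLinearMap.lTensor A ∘ₗ H.comul)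

/-- `J^i` for `i : ZMod 2`. -/
noncomputable def Jpow (H : HopfSuperData k A) (i : ZMod 2) : A →ₗ[k] A :=
  if i = 0 then LinearMap.id else H.J.toLinearMap

/-- `β i a` represents `a # σ^i` in the bosonization `H # k[ℤ/2]`: this predicate says that
an ordinary Hopf algebra `B`, with structural maps given by Mathlib's `HopfAlgebra` class,
is (a realization of) the Radford–Majid bosonization of the Hopf superalgebra `H`. -/
structure IsBosonization {B : Type} [Ring B] [HopfAlgebra k B]
    (H : HopfSuperData k A) (β : ZMod 2 → A →ₗ[k] B) : Prop where
  bij : Function.Bijective fun p : A × A => β 0 p.1 + β 1 p.2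
  map_one : β 0 1 = 1
  map_mul : ∀ (i j : ZMod 2) (a a' : A), β i a * β j a' = β (i + j) (a * H.Jpow i a')
  map_comul : ∀ (i : ZMod 2) (a : A), Coalgebra.comul (β i a) =
      TensorProduct.map (β i) (β i) (H.comulEvenPart a)
      + TensorProduct.map (β (i+1)) (β i) (H.comulOddPart a)
  map_counit : ∀ (i : ZMod 2) (a : A), Coalgebra.counit (β i a) = H.counit a

end HopfSuperData

/-- Evaluation of a bilinear pairing on tensor squares:
`(a ⊗ a') ⊗ (b ⊗ b') ↦ ⟨a,b⟩⟨a',b'⟩`. -/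
noncomputable def pairTensor (Bp : A →ₗ[k] A' →ₗ[k] k) :
    (A ⊗[k] A) ⊗[k] (A' ⊗[k] A') →ₗ[k] k :=
  LinearMap.mul' k k
    ∘ₗ TensorProduct.map (TensorProduct.lift Bp) (TensorProduct.lift Bp)
    ∘ₗ (TensorProduct.tensorTensorTensorComm k A A A' A').toLinearMap

/-- A Hopf (super)pairing between two Hopf superalgebras. -/
structure IsHopfPairing (H : HopfSuperData k A) (H' : HopfSuperData k A')
    (Bp : A →ₗ[k] A' →ₗ[k] k) : Prop where
  parity : ∀ a a', Bp (H.J a) (H'.J a') = Bp a a'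
  pair_mul_right : ∀ (a : A) (b b' : A'),
    Bp a (b * b') = pairTensor Bp (H.comul a ⊗ₜ[k] (b ⊗ₜ[k] b'))
  pair_mul_left : ∀ (a a' : A) (b : A'),
    Bp (a * a') b = pairTensor Bp ((a ⊗ₜ[k] a') ⊗ₜ[k] H'.comul b)
  pair_one_right : ∀ a, Bp a 1 = H.counit a
  pair_one_left : ∀ b, Bp 1 b = H'.counit b

/-- Nondegeneracy of a bilinear pairing. -/
def PairNondeg (Bp : A →ₗ[k] A' →ₗ[k] k) : Prop :=
  (∀ a, (∀ b, Bp a b = 0) → a = 0) ∧ (∀ b, (∀ a, Bp a b = 0) → b = 0)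

end Ext

section Ord
variable (k : Type) [Field k] {A : Type} [AddCommGroup A] [Module k A] [Coalgebra k A]

/-- The right hit action `α ⇀ a = a₍₁₎ α(a₍₂₎)`. -/
noncomputable def hitR (α : A →ₗ[k] k) : A →ₗ[k] A :=
  (TensorProduct.rid k A).toLinearMap ∘ₗ α.lTensor A ∘ₗ Coalgebra.comul

/-- The left hit action `a ↼ α = α(a₍₁₎) a₍₂₎`. -/
noncomputable def hitL (α : A →ₗ[k] k) : A →ₗ[k] A :=
  (TensorProduct.lid k A).toLinearMap ∘ₗ α.rTensor A ∘ₗ Coalgebra.comul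

/-- Convolution product of two functionals on a coalgebra. -/
noncomputable def conv (α β : A →ₗ[k] k) : A →ₗ[k] k :=
  LinearMap.mul' k k ∘ₗ TensorProduct.map α β ∘ₗ Coalgebra.comul

/-- Group-like element of an ordinary coalgebra. -/
def OrdGroupLike (g : A) : Prop :=
  Coalgebra.counit g = (1:k) ∧ Coalgebra.comul g = g ⊗ₜ[k] g

end Ord

section Adm
variable (k : Type) [Field k] {A : Type} [Ring A] [HopfAlgebra k A]

/-- An admissible datum `(g, α)` for a Hopf algebra `A`: `g` is a group-like of order 2,
`α` is a character of convolution-order 2, and `α g = -1`. -/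
def IsAdmissible (g : A) (α : A →ₐ[k] k) : Prop :=
  OrdGroupLike k g ∧ g * g = 1 ∧ g ≠ 1
    ∧ conv k α.toLinearMap α.toLinearMap = Coalgebra.counit
    ∧ α.toLinearMap ≠ Coalgebra.counit ∧ α g = -1

end Adm

section GA
variable (k : Type) [Field k] (M : Type) [Monoid M]

/-- Comultiplication of the group (monoid) algebra: every `of g` is group-like. -/
noncomputable def gaComul : MonoidAlgebra k M →ₗ[k] MonoidAlgebra k M ⊗[k] MonoidAlgebra k M :=
  Finsupp.lsum k (fun g =>
    LinearMap.toSpanSingleton k _ (MonoidAlgebra.of k M g ⊗ₜ[k] MonoidAlgebra.of k M g))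
    ∘ₗ (MonoidAlgebra.coeffLinearEquiv k).toLinearMap

/-- Counit of the group (monoid) algebra. -/
noncomputable def gaCounit : MonoidAlgebra k M →ₗ[k] k :=
  Finsupp.lsum k (fun (_ : M) => (LinearMap.id : k →ₗ[k] k))
    ∘ₗ (MonoidAlgebra.coeffLinearEquiv k).toLinearMap

end GA
section Dim4
variable (k : Type) [Field k] {A : Type} [Ring A] [Algebra k A]

/-- The Hopf superalgebra `H₄⁽²⁾ = k⟨g, z : g²=1, z²=0, gz=zg⟩`, `g` even group-like,
`z` odd primitive. -/
def IsH4two (H : HopfSuperData k A) (g z : A) : Prop :=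
  H.IsGroupLike g ∧ g * g = 1 ∧ H.J z = -z ∧ z * z = 0 ∧ g * z = z * g
    ∧ H.comul z = 1 ⊗ₜ[k] z + z ⊗ₜ[k] 1
    ∧ LinearIndependent k ![1, g, z, g * z] ∧ Module.finrank k A = 4

/-- The Hopf superalgebra `H₄⁽³⁾ = k⟨g, z : g²=1, z²=0, gz=zg⟩`, `g` even group-like,
`z` odd `g`-skew primitive. -/
def IsH4three (H : HopfSuperData k A) (g z : A) : Prop :=
  H.IsGroupLike g ∧ g * g = 1 ∧ H.J z = -z ∧ z * z = 0 ∧ g * z = z * g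
    ∧ H.comul z = g ⊗ₜ[k] z + z ⊗ₜ[k] 1
    ∧ LinearIndependent k ![1, g, z, g * z] ∧ Module.finrank k A = 4

/-- The Hopf superalgebra `H₄⁽⁴⁾ = k⟨g, z : g²=1, z²=0, gz=−zg⟩`, `g` even group-like,
`z` odd primitive. -/
def IsH4four (H : HopfSuperData k A) (g z : A) : Prop :=
  H.IsGroupLike g ∧ g * g = 1 ∧ H.J z = -z ∧ z * z = 0 ∧ g * z = -(z * g)
    ∧ H.comul z = 1 ⊗ₜ[k] z + z ⊗ₜ[k] 1
    ∧ LinearIndependent k ![1, g, z, g * z] ∧ Module.finrank k A = 4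

/-- The semisimple Hopf superalgebra `A₄(ζ) = k⟨x, z : x² + z² = 1, xz = zx = 0⟩` with `x`
even, `z` odd, `Δ(x) = x⊗x + ζ z⊗z`, `Δ(z) = x⊗z + z⊗x`. -/
def IsA4 (ζ : k) (H : HopfSuperData k A) (x z : A) : Prop :=
  H.J x = x ∧ H.J z = -z ∧ x * x + z * z = 1 ∧ x * z = 0 ∧ z * x = 0
    ∧ H.comul x = x ⊗ₜ[k] x + ζ • (z ⊗ₜ[k] z)
    ∧ H.comul z = x ⊗ₜ[k] z + z ⊗ₜ[k] x
    ∧ H.counit x = 1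
    ∧ LinearIndependent k ![1, x, x * x, z] ∧ Module.finrank k A = 4

end Dim4

section Aux
variable {k : Type} [Field k] [CharZero k] {A : Type} [Ring A] [Algebra k A]

/-- Every element decomposes in the basis `1, x, x*x, z`. -/
lemma aux_repr {x z : A} (hli : LinearIndependent k ![1, x, x * x, z])
    (hrank : Module.finrank k A = 4) (b : A) :
    ∃ c : Fin 4 → k, b = c 0 • 1 + c 1 • x + c 2 • (x * x) + c 3 • z := by
  let B := basisOfLinearIndependentOfCardEqFinrank hli (by simp [hrank])
  have hB : ⇑B = ![1, x, x * x, z] := coe_basisOfLinearIndependentOfCardEqFinrank hli _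
  refine ⟨fun i => B.repr b i, ?_⟩
  have := B.sum_repr b
  rw [Fin.sum_univ_four] at this
  simp only [hB] at this
  simpa [Matrix.cons_val_zero, Matrix.cons_val_one] using this.symm

/-- Odd elements are multiples of `z`. -/
lemma aux_odd (H : HopfSuperData k A) {x z : A} (hJx : H.J x = x) (hJz : H.J z = -z)
    (hli : LinearIndependent k ![1, x, x * x, z])
    (hrank : Module.finrank k A = 4) {b : A} (hb : H.J b = -b) :
    ∃ c : k, b = c • z := by
  obtain ⟨c, hc⟩ := aux_repr hli hrank b
  have hJb : H.J b = c 0 • 1 + c 1 • x + c 2 • (x * x) + (-(c 3)) • z := by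
    rw [hc]
    simp [map_add, map_smul, map_one, map_mul, hJx, hJz, neg_smul, smul_neg]
  have h0 : (2 * c 0) • (1:A) + (2 * c 1) • x + (2 * c 2) • (x * x) + (0:k) • z = 0 := by
    have := hb
    rw [hJb, hc] at this
    have h2 : c 0 • (1:A) + c 1 • x + c 2 • (x * x) + (-(c 3)) • z
        + (c 0 • 1 + c 1 • x + c 2 • (x * x) + c 3 • z) = 0 := by
      rw [this]; abel
    rw [← h2]
    simp only [two_mul, add_smul, neg_smul, zero_smul]
    abel
  have key := Fintype.linearIndependent_iff.mp hli ![2 * c 0, 2 * c 1, 2 * c 2, 0]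
    (by rw [Fin.sum_univ_four]; simpa using h0)
  have hc0 : c 0 = 0 := by have := key 0; simp at this; tauto
  have hc1 : c 1 = 0 := by have := key 1; simp at this; tauto
  have hc2 : c 2 = 0 := by have := key 2; simp at this; tauto
  exact ⟨c 3, by rw [hc, hc0, hc1, hc2]; simp⟩

/-- Even elements lie in the span of `1, x, x*x`. -/
lemma aux_even (H : HopfSuperData k A) {x z : A} (hJx : H.J x = x) (hJz : H.J z = -z)
    (hli : LinearIndependent k ![1, x, x * x, z])
    (hrank : Module.finrank k A = 4) {b : A} (hb : H.J b = b) :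
    ∃ c : Fin 3 → k, b = c 0 • 1 + c 1 • x + c 2 • (x * x) := by
  obtain ⟨c, hc⟩ := aux_repr hli hrank b
  have hJb : H.J b = c 0 • 1 + c 1 • x + c 2 • (x * x) + (-(c 3)) • z := by
    rw [hc]
    simp [map_add, map_smul, map_one, map_mul, hJx, hJz, neg_smul, smul_neg]
  have h0 : (0:k) • (1:A) + (0:k) • x + (0:k) • (x * x) + (2 * c 3) • z = 0 := by
    have := hb
    rw [hJb, hc] at this
    have h2 : (c 0 • (1:A) + c 1 • x + c 2 • (x * x) + c 3 • z)
        - (c 0 • 1 + c 1 • x + c 2 • (x * x) + (-(c 3)) • z) = 0 := by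
      rw [← this]; abel
    rw [← h2]
    simp only [two_mul, add_smul, neg_smul, zero_smul]
    abel
  have key := Fintype.linearIndependent_iff.mp hli ![0, 0, 0, 2 * c 3]
    (by rw [Fin.sum_univ_four]; simpa using h0)
  have hc3 : c 3 = 0 := by have := key 3; simp at this; tauto
  refine ⟨![c 0, c 1, c 2], ?_⟩
  rw [hc, hc3]; simp

/-- Any linear map satisfying the (right) antipode identity and commuting with the parity
involution sends `z` to `ζ⁻¹ • z` (stated inverse-free). -/
lemma aux_eigen {ζ : k} (H : HopfSuperData k A) {x z : A} (hH : IsA4 k ζ H x z)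
    (T : A →ₗ[k] A) (hTJ : ∀ a, T (H.J a) = H.J (T a))
    (hT : ∀ a, LinearMap.mul' k A (T.rTensor A (H.comul a)) = algebraMap k A (H.counit a)) :
    ζ • T z = z := by
  obtain ⟨hJx, hJz, hx2z2, hxz, hzx, hcx, hcz, hεx, hli, hrank⟩ := hH
  have hxne : x ≠ 0 := by
    have := hli.ne_zero 1; simpa using this
  have hzne : z ≠ 0 := by
    have := hli.ne_zero 3; simpa using this
  -- counit of z is 0
  have hεz : H.counit z = 0 := by
    have := H.rTensor_counit_comul z
    rw [hcz] at this
    simp only [map_add, LinearMap.rTensor_tmul, TensorProduct.lid_tmul, hεx, one_smul] at this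
    have h0 : H.counit z • x = 0 := by
      have := add_left_cancel (a := z) (by rw [this]; abel : z + H.counit z • x = z + 0)
      simpa using this
    rcases smul_eq_zero.mp h0 with h | h
    · exact h
    · exact absurd h hxne
  -- T z is odd
  have hTz_odd : H.J (T z) = -(T z) := by
    have := hTJ z
    rw [hJz, map_neg] at this
    rw [← this]
  obtain ⟨c, hc⟩ := aux_odd H hJx hJz hli hrank hTz_odd
  -- T x is even
  have hTx_even : H.J (T x) = T x := by
    have := hTJ x; rw [hJx] at this; exact this.symm
  obtain ⟨d, hd⟩ := aux_even H hJx hJz hli hrank hTx_even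
  -- useful ring identities
  have hzz : z * z = 1 - x * x := by rw [← hx2z2]; abel
  have hxxz : (x * x) * z = 0 := by rw [mul_assoc, hxz, mul_zero]
  have hxx : x * x = 1 - z * z := by rw [← hx2z2]; abel
  have hx3 : x * x * x = x := by
    rw [mul_assoc, hxx, mul_sub, mul_one, ← mul_assoc, hxz, zero_mul, sub_zero]
  -- equation from a = z :  (T x) * z + (T z) * x = 0
  have eq1 : T x * z + T z * x = 0 := by
    have := hT z
    rw [hcz] at this
    simp only [map_add, LinearMap.rTensor_tmul, LinearMap.mul'_apply, hεz, map_zero] at this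
    exact this
  have hd0 : d 0 = 0 := by
    have : d 0 • z = 0 := by
      have h := eq1
      rw [hc, hd] at h
      rw [add_mul, add_mul, smul_mul_assoc, smul_mul_assoc, smul_mul_assoc, smul_mul_assoc,
        one_mul, hxz, hxxz, hzx, smul_zero, smul_zero, smul_zero] at h
      simpa using h
    rcases smul_eq_zero.mp this with h | h
    · exact h
    · exact absurd h hzne
  -- equation from a = x :  (T x) * x + ζ • ((T z) * z) = 1
  have eq2 : T x * x + ζ • (T z * z) = 1 := by
    have := hT x
    rw [hcx] at this
    simp only [map_add, map_smul, LinearMap.rTensor_tmul, LinearMap.mul'_apply, hεx,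
      map_one] at this
    exact this
  have key : (ζ * c - 1) • (1:A) + d 2 • x + (d 1 - ζ * c) • (x * x) + (0:k) • z = 0 := by
    have h := eq2
    rw [hc, hd, hd0, zero_smul, zero_add, add_mul, smul_mul_assoc, smul_mul_assoc,
      smul_mul_assoc, smul_smul, hx3, hzz] at h
    linear_combination (norm := module) h
  have key2 := Fintype.linearIndependent_iff.mp hli ![ζ * c - 1, d 2, d 1 - ζ * c, 0]
    (by rw [Fin.sum_univ_four]; simpa using key)
  have hζc : ζ * c = 1 := sub_eq_zero.mp (by simpa using key2 0)
  rw [hc, smul_smul, hζc, one_smul]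

end Aux
/-- The Hopf superalgebras `A₄(ζ₄)` and `A₄(−ζ₄)` are not isomorphic,
where `ζ₄` is a primitive fourth root of unity. -/
theorem stmt16 (k : Type) [Field k] [IsAlgClosed k] [CharZero k]
    (ζ : k) (hζ : ζ ^ 2 = -1)
    (A : Type) [Ring A] [Algebra k A] (H : HopfSuperData k A) (x z : A)
    (hH : IsA4 k ζ H x z)
    (A' : Type) [Ring A'] [Algebra k A'] (H' : HopfSuperData k A') (x' z' : A')
    (hH' : IsA4 k (-ζ) H' x' z') :
    ¬ ∃ e : A ≃ₐ[k] A', H.IsIso H' e := by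
  rintro ⟨e, hJe, hcome, hεe⟩
  have hS : ζ • H.antipode z = z :=
    aux_eigen H hH H.antipode H.antipode_J H.mul_antipode_rTensor_comul
  obtain ⟨hJx, hJz, hx2z2, hxz, hzx, hcx, hcz, hεx, hli, hrank⟩ := hH
  obtain ⟨hJx', hJz', hx2z2', hxz', hzx', hcx', hcz', hεx', hli', hrank'⟩ := hH'
  set T' : A' →ₗ[k] A' := e.toLinearMap ∘ₗ H.antipode ∘ₗ e.symm.toLinearMap with hT'def
  have hsymmJ : ∀ b : A', e.symm (H'.J b) = H.J (e.symm b) := by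
    intro b
    apply e.injective
    rw [hJe, e.apply_symm_apply, e.apply_symm_apply]
  have hT'J : ∀ b, T' (H'.J b) = H'.J (T' b) := by
    intro b
    simp only [hT'def, LinearMap.comp_apply, AlgEquiv.toLinearMap_apply]
    rw [hsymmJ, H.antipode_J, hJe]
  have haux : ∀ t : A ⊗[k] A,
      LinearMap.mul' k A' (T'.rTensor A' (TensorProduct.map e.toLinearMap e.toLinearMap t))
        = e (LinearMap.mul' k A (H.antipode.rTensor A t)) := by
    intro t
    induction t using TensorProduct.induction_on with
    | zero => simp
    | tmul a b =>
        simp [hT'def, LinearMap.rTensor_tmul, LinearMap.mul'_apply, map_mul,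
          TensorProduct.map_tmul]
    | add u v hu hv => simp only [map_add, hu, hv]
  have hT'ant : ∀ b, LinearMap.mul' k A' (T'.rTensor A' (H'.comul b))
      = algebraMap k A' (H'.counit b) := by
    intro b
    have hb : b = e (e.symm b) := (e.apply_symm_apply b).symm
    rw [hb, hcome, haux, H.mul_antipode_rTensor_comul, hεe]
    exact e.commutes _
  have hS' : (-ζ) • T' z' = z' :=
    aux_eigen H' ⟨hJx', hJz', hx2z2', hxz', hzx', hcx', hcz', hεx', hli', hrank'⟩ T' hT'J hT'ant
  -- e z is odd, hence a multiple of z'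
  have hez_odd : H'.J (e z) = -(e z) := by
    rw [← hJe, hJz, map_neg]
  obtain ⟨c₃, hc3⟩ := aux_odd H' hJx' hJz' hli' hrank' hez_odd
  have hz_ne : z ≠ 0 := by simpa using hli.ne_zero 3
  have hez : T' (e z) = e (H.antipode z) := by
    simp [hT'def]
  have hA : ζ • T' (e z) = e z := by
    rw [hez, ← map_smul, hS]
  have hB : (-ζ) • T' (e z) = e z := by
    have h1 : T' (e z) = c₃ • T' z' := by rw [hc3, map_smul]
    rw [h1, smul_comm, hS', ← hc3]
  have h2 : e z + e z = (0:A') := by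
    calc e z + e z = ζ • T' (e z) + (-ζ) • T' (e z) := by rw [hA, hB]
    _ = 0 := by module
  have h3 : (2:k) • e z = 0 := by rw [two_smul]; exact h2
  have h4 : e z = 0 := by
    rcases smul_eq_zero.mp h3 with h | h
    · exact absurd h two_ne_zero
    · exact h
  exact hz_ne (e.injective (by simpa using h4))
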